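/- Assume the execution is admissible. Let s ∈ ℕ, s ≥ 1, be such that every directed cycle has nonnegative ω^{s−1/2}-weight, let v ∈ V, and let t < t' be times with t' ≥ t + Ψ^{s−1/2}(t)/μ. Then L_v(t') − L_v(t) ≥ (t'−t) + Ψ_v^s(t). -/

import Mathlib

open SimpleGraph

namespace GCS

variable {V : Type*}

def edgeWt (δ O : V → V → ℝ) (s : ℝ) (v w : V) : ℝ :=
  4 * s * δ v w - O v w

def walkWt {G : SimpleGraph V} (δ O : V → V → ℝ) (s : ℝ) {v w : V}
    (p : G.Walk v w) : ℝ :=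
  (p.darts.map fun d => edgeWt δ O s d.toProd.1 d.toProd.2).sum

def NonnegCycles (G : SimpleGraph V) (δ O : V → V → ℝ) (s : ℝ) : Prop :=
  ∀ (v : V) (c : G.Walk v v), c.IsCycle → 0 ≤ walkWt δ O s c

noncomputable def dS (G : SimpleGraph V) (δ O : V → V → ℝ) (s : ℝ) (v w : V) : ℝ :=
  sInf {x : ℝ | ∃ p : G.Walk v w, walkWt δ O s p = x}

noncomputable def Psi (G : SimpleGraph V) (δ O : V → V → ℝ) (s : ℝ)
    (L : V → ℝ → ℝ) (v : V) (t : ℝ) : ℝ :=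
  sSup {x : ℝ | ∃ w : V, ∃ p : G.Walk v w, x = L w t - L v t - walkWt δ O s p}

noncomputable def PsiAll (G : SimpleGraph V) (δ O : V → V → ℝ) (s : ℝ)
    (L : V → ℝ → ℝ) (t : ℝ) : ℝ :=
  ⨆ v : V, Psi G δ O s L v t

noncomputable def PsiE (G : SimpleGraph V) (δ O : V → V → ℝ) (s : ℝ)
    (L : V → ℝ → ℝ) (v : V) (t : ℝ) : EReal :=
  ⨆ w : V, ⨆ p : G.Walk v w, ((L w t - L v t - walkWt δ O s p : ℝ) : EReal)

def SlowCondAt (G : SimpleGraph V) (δ O : V → V → ℝ) (L : V → ℝ → ℝ)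
    (v : V) (t : ℝ) (s : ℕ) : Prop :=
  (∃ w, G.Adj v w ∧ 4 * (s : ℝ) * δ v w ≤ L v t - L w t - O v w) ∧
  (∀ w, G.Adj v w → -(4 * (s : ℝ) * δ v w) ≤ L v t - L w t - O v w)

def FastCondAt (G : SimpleGraph V) (δ O : V → V → ℝ) (L : V → ℝ → ℝ)
    (v : V) (t : ℝ) (s : ℕ) : Prop :=
  (∃ w, G.Adj v w ∧ L v t - L w t - O v w ≤ -((4 * (s : ℝ) + 2) * δ v w)) ∧
  (∀ w, G.Adj v w → L v t - L w t - O v w ≤ (4 * (s : ℝ) + 2) * δ v w)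

def Admissible (G : SimpleGraph V) (δ O : V → V → ℝ) (L : V → ℝ → ℝ)
    (ϑ μ : ℝ) : Prop :=
  ∀ (v : V) (t : ℝ),
    ((∃ s : ℕ, SlowCondAt G δ O L v t s) → deriv (L v) t ≤ ϑ) ∧
    ((∃ s : ℕ, FastCondAt G δ O L v t s) → 1 + μ ≤ deriv (L v) t)

def AdmissibleOn (G : SimpleGraph V) (δ O : V → V → ℝ) (L : V → ℝ → ℝ)
    (ϑ μ : ℝ) (a b : ℝ) : Prop :=
  ∀ (v : V), ∀ t ∈ Set.Icc a b,
    ((∃ s : ℕ, SlowCondAt G δ O L v t s) → deriv (L v) t ≤ ϑ) ∧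
    ((∃ s : ℕ, FastCondAt G δ O L v t s) → 1 + μ ≤ deriv (L v) t)

end GCS

/-!
Fix `w` and let `d` be the `ω^{s-1/2}`-distance, which is attained by paths since cycles are
nonnegative. Consider the lags `h_u(τ) = L_w(t) + (τ - t) - L_u(τ) - d(u, w)`, all at most
`Ψ^{s-1/2}(t)` at time `t`. A node carrying a positive maximal lag is not `w` (whose clock runs
at rate at least `1`), and maximality against the next node of a shortest path to `w` and against
all neighbours is exactly the fast condition on level `s - 1`. Hence the maximal lag decreases at
rate `μ` while it is positive, and it is nonpositive at time `t'`. For the lag of `v` this reads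
`L_w(t) - L_v(t) - d(v, w) ≤ L_v(t') - L_v(t) - (t' - t)`; taking the supremum over `w` bounds
`Ψ_v^{s-1/2}(t)`, which dominates `Ψ_v^s(t)`.
-/

open SimpleGraph Set Filter Topology Finset

section Barrier

variable {ι : Type*} [Fintype ι] [Nonempty ι] {h : ι → ℝ → ℝ}

lemma eventually_slope_sup'_lt {x r : ℝ} (hd : ∀ u, DifferentiableAt ℝ (h u) x)
    (hr : ∀ u, h u x = univ.sup' univ_nonempty (h · x) → deriv (h u) x < r) :
    ∀ᶠ z in 𝓝[>] x, slope (fun y => univ.sup' univ_nonempty (h · y)) x z < r := by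
  set F : ℝ → ℝ := fun y => univ.sup' univ_nonempty (h · y)
  have hbelow : ∀ u, ∀ᶠ z in 𝓝[>] x, h u z < F x + r * (z - x) := by
    intro u
    by_cases hu : h u x = F x
    · have hslope := ((hd u).hasDerivAt.hasDerivWithinAt (s := Ioi x)).limsup_slope_le'
        (lt_irrefl x) (hr u hu)
      filter_upwards [hslope, self_mem_nhdsWithin] with z hz hzx
      rw [slope_def_field, div_lt_iff₀ (sub_pos.mpr hzx)] at hz
      linarith
    · have hlt : h u x < F x + r * (x - x) := by
        rw [sub_self, mul_zero, add_zero]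
        exact lt_of_le_of_ne (le_sup' (h · x) (mem_univ u)) hu
      have hcont : ContinuousAt (fun z => h u z - (F x + r * (z - x))) x := by
        have := (hd u).continuousAt
        fun_prop
      have := hcont.eventually_lt continuousAt_const (sub_neg.mpr hlt)
      filter_upwards [nhdsWithin_le_nhds this] with z hz
      linarith
  filter_upwards [eventually_all.mpr hbelow, self_mem_nhdsWithin] with z hz hzx
  rw [slope_def_field, div_lt_iff₀ (sub_pos.mpr hzx), sub_lt_iff_lt_add']
  exact (sup'_lt_iff _).mpr fun u _ => hz u

lemma hasDerivWithinAt_max_sub_mul_zero {a c μ : ℝ} (hμ : 0 ≤ μ) (x : ℝ) :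
    HasDerivWithinAt (fun y => max (c - μ * (y - a)) 0)
      (if 0 < c - μ * (x - a) then -μ else 0) (Ici x) x := by
  split_ifs with hpos
  · have hlin : HasDerivAt (fun y => c - μ * (y - a)) (-μ) x := by
      simpa using ((hasDerivAt_id x).sub_const a).const_mul μ |>.const_sub c
    have hev : (fun y => max (c - μ * (y - a)) 0) =ᶠ[𝓝 x] fun y => c - μ * (y - a) := by
      have hcont : ContinuousAt (fun y => c - μ * (y - a)) x := hlin.continuousAt
      filter_upwards [continuousAt_const.eventually_lt hcont hpos] with y hy
      exact max_eq_left hy.le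
    exact (hlin.congr_of_eventuallyEq hev).hasDerivWithinAt
  · refine (hasDerivWithinAt_const x (Ici x) (0 : ℝ)).congr (fun y hy => ?_) ?_
    · have : μ * (x - a) ≤ μ * (y - a) := by gcongr; exact hy
      exact max_eq_right (by linarith)
    · exact max_eq_right (not_lt.mp hpos)

lemma le_max_sub_mul_of_deriv_le_neg (hd : ∀ u, Differentiable ℝ (h u)) {a b c μ : ℝ}
    (hμ : 0 ≤ μ) (ha : ∀ u, h u a ≤ c)
    (hfast : ∀ x ∈ Ico a b, ∀ u, 0 < h u x → (∀ y, h y x ≤ h u x) → deriv (h u) x ≤ -μ)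
    {x : ℝ} (hx : x ∈ Icc a b) (u : ι) : h u x ≤ max (c - μ * (x - a)) 0 := by
  classical
  set F : ℝ → ℝ := fun y => univ.sup' univ_nonempty (h · y)
  set g : ℝ → ℝ := fun y => max (c - μ * (y - a)) 0
  -- bounds the right Dini derivative of `F`; only maximal members of the family matter
  set F' : ℝ → ℝ := fun y =>
    univ.sup' univ_nonempty fun u => if h u y = F y then deriv (h u) y else -μ
  have hFcont : Continuous F := Continuous.finset_sup'_apply _ fun u _ => (hd u).continuous
  have hbarrier : ∀ ε > 0, F x ≤ g x + ε * (1 + (x - a)) := by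
    intro ε hε
    refine image_le_of_liminf_slope_right_lt_deriv_boundary' (f' := F')
      (B := fun y => g y + ε * (1 + (y - a)))
      (B' := fun y => (if 0 < c - μ * (y - a) then -μ else 0) + ε * 1)
      hFcont.continuousOn (fun y _ r hr => ?_) ?_ (by fun_prop) (fun y _ => ?_) ?_ hx
    · refine (eventually_slope_sup'_lt (fun u => (hd u y)) fun u hu => ?_).frequently
      refine lt_of_le_of_lt ?_ hr
      have hle := le_sup' (fun u => if h u y = F y then deriv (h u) y else -μ) (mem_univ u)
      rwa [if_pos hu] at hle
    · simp only [g, sub_self, mul_zero, sub_zero]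
      exact (sup'_le _ _ fun u _ => ha u).trans (by linarith [le_max_left c 0])
    · exact (hasDerivWithinAt_max_sub_mul_zero hμ y).add
        (((hasDerivAt_id y).sub_const a).const_add 1 |>.const_mul ε).hasDerivWithinAt
    · rintro y hy hcontact
      have hFpos : 0 < F y := by
        rw [hcontact]
        have : 0 ≤ g y := le_max_right _ _
        have : 0 < ε * (1 + (y - a)) := mul_pos hε (by linarith [hy.1])
        linarith
      have hF' : F' y ≤ -μ := by
        refine sup'_le _ _ fun u _ => ?_
        split_ifs with hu
        · exact hfast y hy u (hu ▸ hFpos) fun v => hu ▸ le_sup' (h · y) (mem_univ v)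
        · exact le_rfl
      split_ifs <;> linarith
  have hF : F x ≤ g x := by
    have hpos : 0 < 1 + (x - a) := by linarith [hx.1]
    refine le_of_forall_pos_le_add fun ε hε => ?_
    have := hbarrier (ε / (1 + (x - a))) (div_pos hε hpos)
    rwa [div_mul_cancel₀ _ hpos.ne'] at this
  exact (le_sup' (h · x) (mem_univ u)).trans hF

end Barrier

namespace GCS

variable {V : Type*} {G : SimpleGraph V} {δ O : V → V → ℝ} {σ σ' : ℝ}

@[simp]
lemma walkWt_nil {v : V} : walkWt δ O σ (Walk.nil : G.Walk v v) = 0 := by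
  simp [walkWt]

@[simp]
lemma walkWt_cons {u x w : V} (h : G.Adj u x) (p : G.Walk x w) :
    walkWt δ O σ (Walk.cons h p) = edgeWt δ O σ u x + walkWt δ O σ p := by
  simp [walkWt]

lemma walkWt_append {u x w : V} (p : G.Walk u x) (q : G.Walk x w) :
    walkWt δ O σ (p.append q) = walkWt δ O σ p + walkWt δ O σ q := by
  simp [walkWt, Walk.darts_append]

lemma walkWt_mono (hδpos : ∀ v w, G.Adj v w → 0 < δ v w) (hσ : σ ≤ σ') {u w : V}
    (p : G.Walk u w) : walkWt δ O σ p ≤ walkWt δ O σ' p := by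
  refine List.sum_le_sum fun d _ => ?_
  have := hδpos _ _ d.adj
  simp only [edgeWt]
  gcongr

section ShortestPaths

variable (hδpos : ∀ v w, G.Adj v w → 0 < δ v w) (hOanti : ∀ v w, G.Adj v w → O v w = -O w v)
  (hσ : 0 ≤ σ) (hnc : NonnegCycles G δ O σ)
include hδpos hOanti hσ hnc

-- Either `cons h q` is a cycle, or `q` is the edge `ba` itself and the weight is `8 σ δ ≥ 0`.
lemma walkWt_cons_nonneg_of_isPath {a b : V} (h : G.Adj a b) {q : G.Walk b a} (hq : q.IsPath) :
    0 ≤ walkWt δ O σ (Walk.cons h q) := by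
  by_cases hab : s(a, b) ∈ q.edges
  · cases q with
    | nil => simp at hab
    | cons h' q' =>
      rw [Walk.cons_isPath_iff] at hq
      rw [Walk.edges_cons, List.mem_cons] at hab
      rcases hab with hab | hab
      · obtain ⟨rfl, rfl⟩ | ⟨rfl, -⟩ := Sym2.eq_iff.mp hab
        · exact absurd rfl h.ne
        · obtain rfl := Walk.eq_nil_iff_nil.mpr (Walk.isPath_iff_nil.mp hq.1)
          have := hδpos _ _ h
          have := hδpos _ _ h'
          simp only [walkWt_cons, walkWt_nil, edgeWt, hOanti _ _ h]
          nlinarith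
      · exact absurd (Walk.snd_mem_support_of_mem_edges q' hab) hq.2
  · exact hnc _ _ ((Walk.cons_isCycle_iff q h).mpr ⟨hq, hab⟩)

lemma exists_isPath_walkWt_le {u w : V} (p : G.Walk u w) :
    ∃ q : G.Walk u w, q.IsPath ∧ walkWt δ O σ q ≤ walkWt δ O σ p := by
  classical
  induction p with
  | nil => exact ⟨Walk.nil, .nil, le_rfl⟩
  | @cons a b c h p ih =>
    obtain ⟨q, hq, hle⟩ := ih
    by_cases ha : a ∈ q.support
    · have hloop := walkWt_cons_nonneg_of_isPath hδpos hOanti hσ hnc h (hq.takeUntil ha)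
      have hsplit := congrArg (walkWt δ O σ) (q.take_spec ha)
      rw [walkWt_append] at hsplit
      rw [walkWt_cons] at hloop
      exact ⟨q.dropUntil a ha, hq.dropUntil ha, by rw [walkWt_cons]; linarith⟩
    · exact ⟨.cons h q, hq.cons ha, by simp only [walkWt_cons]; linarith⟩

variable [Finite V] (hconn : G.Connected)
include hconn

lemma isLeast_dS (u w : V) :
    IsLeast {x | ∃ p : G.Walk u w, walkWt δ O σ p = x} (dS G δ O σ u w) := by
  classical
  have : Fintype V := Fintype.ofFinite V
  have : Nonempty (G.Path u w) := ⟨(hconn.preconnected u w).some.toPath⟩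
  obtain ⟨pm, hpm⟩ := Finite.exists_min fun q : G.Path u w => walkWt δ O σ (q : G.Walk u w)
  have hleast : IsLeast {x | ∃ p : G.Walk u w, walkWt δ O σ p = x} (walkWt δ O σ pm.1) := by
    refine ⟨⟨pm, rfl⟩, ?_⟩
    rintro _ ⟨p, rfl⟩
    obtain ⟨q, hq, hle⟩ := exists_isPath_walkWt_le hδpos hOanti hσ hnc p
    exact (hpm ⟨q, hq⟩).trans hle
  rwa [dS, hleast.csInf_eq]

lemma dS_self (w : V) : dS G δ O σ w w = 0 := by
  obtain ⟨p, hp⟩ := (isLeast_dS hδpos hOanti hσ hnc hconn w w).1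
  obtain ⟨q, hq, hle⟩ := exists_isPath_walkWt_le hδpos hOanti hσ hnc p
  rw [Walk.eq_nil_iff_nil.mpr (Walk.isPath_iff_nil.mp hq), walkWt_nil, hp] at hle
  exact le_antisymm ((isLeast_dS hδpos hOanti hσ hnc hconn w w).2 ⟨.nil, walkWt_nil⟩) hle

lemma dS_le_edgeWt_add {u x : V} (h : G.Adj u x) (w : V) :
    dS G δ O σ u w ≤ edgeWt δ O σ u x + dS G δ O σ x w := by
  obtain ⟨p, hp⟩ := (isLeast_dS hδpos hOanti hσ hnc hconn x w).1
  rw [← hp, ← walkWt_cons h]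
  exact (isLeast_dS hδpos hOanti hσ hnc hconn u w).2 ⟨_, rfl⟩

lemma sub_dS_le_Psi (L : V → ℝ → ℝ) (v w : V) (t : ℝ) :
    L w t - L v t - dS G δ O σ v w ≤ Psi G δ O σ L v t := by
  have hdS := isLeast_dS hδpos hOanti hσ hnc hconn v
  obtain ⟨M, hM⟩ := (Set.finite_range fun u => L u t - L v t - dS G δ O σ v u).bddAbove
  refine le_csSup ⟨M, ?_⟩ ?_
  · rintro _ ⟨u, p, rfl⟩
    linarith [hM ⟨u, rfl⟩, (hdS u).2 ⟨p, rfl⟩]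
  · obtain ⟨p, hp⟩ := (hdS w).1
    exact ⟨w, p, by rw [hp]⟩

-- Compare `u` with the next node on a shortest path to `w`, and with each of its neighbours.
lemma fastCondAt_of_forall_le (hδsym : ∀ v w, G.Adj v w → δ v w = δ w v) {n : ℕ}
    (hn : σ = n + 1 / 2) (L : V → ℝ → ℝ) {u w : V} {τ : ℝ} (hne : u ≠ w)
    (hmin : ∀ y, L u τ + dS G δ O σ u w ≤ L y τ + dS G δ O σ y w) :
    FastCondAt G δ O L u τ n := by
  have hdS := isLeast_dS hδpos hOanti hσ hnc hconn
  constructor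
  · obtain ⟨p, hp⟩ := (hdS u w).1
    cases p with
    | nil => exact absurd rfl hne
    | @cons _ x _ h p =>
      have hwt : 4 * σ * δ u x = (4 * n + 2) * δ u x := by rw [hn]; ring
      refine ⟨x, h, ?_⟩
      rw [walkWt_cons, edgeWt] at hp
      linarith [(hdS x w).2 ⟨p, rfl⟩, hmin x]
  · intro y hy
    have hwt : 4 * σ * δ y u = (4 * n + 2) * δ u y := by rw [hn, hδsym u y hy]; ring
    have htri := dS_le_edgeWt_add hδpos hOanti hσ hnc hconn hy.symm w
    rw [edgeWt, hOanti y u hy.symm] at htri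
    linarith [hmin y]

end ShortestPaths

lemma Psi_le_PsiAll [Finite V] (L : V → ℝ → ℝ) (v : V) (t : ℝ) :
    Psi G δ O σ L v t ≤ PsiAll G δ O σ L t :=
  le_ciSup (f := fun u => Psi G δ O σ L u t) (Set.finite_range _).bddAbove v

lemma Psi_le_of_forall {L : V → ℝ → ℝ} {v : V} {t X : ℝ}
    (h : ∀ w (p : G.Walk v w), L w t - L v t - walkWt δ O σ p ≤ X) :
    Psi G δ O σ L v t ≤ X :=
  csSup_le ⟨_, v, .nil, rfl⟩ (by rintro _ ⟨w, p, rfl⟩; exact h w p)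

lemma add_sub_dS_le_of_psiAll_le [Finite V] (hconn : G.Connected)
    (hδpos : ∀ v w, G.Adj v w → 0 < δ v w)
    (hδsym : ∀ v w, G.Adj v w → δ v w = δ w v) (hOanti : ∀ v w, G.Adj v w → O v w = -O w v)
    {L : V → ℝ → ℝ} (hdiff : ∀ v, Differentiable ℝ (L v)) (hlo : ∀ v t, 1 ≤ deriv (L v) t)
    {ϑ μ : ℝ} (hμ : 0 < μ) (hadm : Admissible G δ O L ϑ μ) {n : ℕ}
    (hnc : NonnegCycles G δ O (n + 1 / 2)) {t t' : ℝ} (htt' : t ≤ t')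
    (hwait : PsiAll G δ O (n + 1 / 2) L t ≤ μ * (t' - t)) (v w : V) :
    L w t + (t' - t) - dS G δ O (n + 1 / 2) v w ≤ L v t' := by
  set σ : ℝ := n + 1 / 2
  have hσ : 0 ≤ σ := by positivity
  set h : V → ℝ → ℝ := fun u τ => L w t + (τ - t) - L u τ - dS G δ O σ u w with hh
  have hd : ∀ u, Differentiable ℝ (h u) := fun u => by
    have := hdiff u
    fun_prop
  have hderiv : ∀ u τ, deriv (h u) τ = 1 - deriv (L u) τ := fun u τ => by
    have := ((((hasDerivAt_id τ).sub_const t).const_add (L w t)).sub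
      (hdiff u τ).hasDerivAt).sub_const (dS G δ O σ u w)
    exact this.deriv
  have hlag_w : ∀ τ, t ≤ τ → h w τ ≤ 0 := fun τ hτ => by
    have := mul_sub_le_image_sub_of_le_deriv (hdiff w) (hlo w) hτ
    simp only [hh, dS_self hδpos hOanti hσ hnc hconn]
    linarith
  have hfast : ∀ τ ∈ Ico t t', ∀ u, 0 < h u τ → (∀ y, h y τ ≤ h u τ) → deriv (h u) τ ≤ -μ := by
    intro τ hτ u hpos hmax
    have hne : u ≠ w := by
      rintro rfl
      linarith [hlag_w τ hτ.1]
    have hmin : ∀ y, L u τ + dS G δ O σ u w ≤ L y τ + dS G δ O σ y w := fun y => by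
      have := hmax y
      simp only [hh] at this
      linarith
    have := (hadm u τ).2
      ⟨n, fastCondAt_of_forall_le hδpos hOanti hσ hnc hconn hδsym rfl L hne hmin⟩
    rw [hderiv]
    linarith
  have hinit : ∀ u, h u t ≤ PsiAll G δ O σ L t := fun u => by
    simp only [hh, sub_self, add_zero]
    exact (sub_dS_le_Psi hδpos hOanti hσ hnc hconn L u w t).trans (Psi_le_PsiAll L u t)
  have := Fintype.ofFinite V
  have : Nonempty V := ⟨v⟩
  have hlag_v := le_max_sub_mul_of_deriv_le_neg hd hμ.le hinit hfast ⟨htt', le_rfl⟩ v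
  rw [max_eq_right (by linarith)] at hlag_v
  simp only [hh] at hlag_v
  linarith

end GCS

theorem catchup_cor_general
    {V : Type*} [Fintype V]
    (G : SimpleGraph V) (hconn : G.Connected)
    (δ O : V → V → ℝ)
    (hδpos : ∀ v w, G.Adj v w → 0 < δ v w)
    (hδsym : ∀ v w, G.Adj v w → δ v w = δ w v)
    (hOanti : ∀ v w, G.Adj v w → O v w = -O w v)
    (L : V → ℝ → ℝ) (ϑ μ : ℝ) (hμ : 0 < μ)
    (hdiff : ∀ v, Differentiable ℝ (L v))
    (hlo : ∀ (v : V) (t : ℝ), 1 ≤ deriv (L v) t)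
    (hadm : GCS.Admissible G δ O L ϑ μ)
    (s : ℕ) (hs1 : 1 ≤ s) (hnc : GCS.NonnegCycles G δ O ((s : ℝ) - 1/2))
    (v : V) (t t' : ℝ) (htt' : t < t')
    (hwait : t + GCS.PsiAll G δ O ((s : ℝ) - 1/2) L t / μ ≤ t') :
    (t' - t) + GCS.Psi G δ O (s : ℝ) L v t ≤ L v t' - L v t := by
  obtain ⟨n, rfl⟩ : ∃ n, s = n + 1 := ⟨s - 1, by omega⟩
  have hσ : ((n + 1 : ℕ) : ℝ) - 1 / 2 = n + 1 / 2 := by push_cast; ring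
  rw [hσ] at hnc hwait
  have hwait' : GCS.PsiAll G δ O (n + 1 / 2) L t ≤ μ * (t' - t) := by
    rw [← div_le_iff₀' hμ]
    linarith
  refine le_sub_iff_add_le'.mp (GCS.Psi_le_of_forall fun w p => ?_)
  have hlevel : (n : ℝ) + 1 / 2 ≤ (n + 1 : ℕ) := by push_cast; linarith
  have hmono := GCS.walkWt_mono (O := O) hδpos hlevel p
  have hdS := (GCS.isLeast_dS hδpos hOanti (by positivity) hnc hconn v w).2 ⟨p, rfl⟩
  linarith [GCS.add_sub_dS_le_of_psiAll_le hconn hδpos hδsym hOanti hdiff hlo hμ hadm hnc htt'.le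
    hwait' v w]

/-- catch-up corollary: if `t' ≥ t + Ψ^{s-1/2}(t)/μ`, then
`L_v(t') - L_v(t) ≥ (t'-t) + Ψ_v^s(t)`. -/
theorem catchup_cor
    {V : Type*} [Fintype V] [DecidableEq V] [Nonempty V]
    (G : SimpleGraph V) (hconn : G.Connected)
    (δ O : V → V → ℝ)
    (hδpos : ∀ v w, G.Adj v w → 0 < δ v w)
    (hδsym : ∀ v w, G.Adj v w → δ v w = δ w v)
    (hOanti : ∀ v w, G.Adj v w → O v w = -O w v)
    (L : V → ℝ → ℝ) (ϑ μ : ℝ) (hϑ : 1 < ϑ) (hμ : 0 < μ)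
    (hdiff : ∀ v, Differentiable ℝ (L v))
    (hlo : ∀ (v : V) (t : ℝ), 1 ≤ deriv (L v) t)
    (hhi : ∀ (v : V) (t : ℝ), deriv (L v) t ≤ ϑ * (1 + μ))
    (hadm : GCS.Admissible G δ O L ϑ μ)
    (s : ℕ) (hs1 : 1 ≤ s) (hnc : GCS.NonnegCycles G δ O ((s : ℝ) - 1/2))
    (v : V) (t t' : ℝ) (htt' : t < t')
    (hwait : t + GCS.PsiAll G δ O ((s : ℝ) - 1/2) L t / μ ≤ t') :
    (t' - t) + GCS.Psi G δ O (s : ℝ) L v t ≤ L v t' - L v t :=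
  catchup_cor_general G hconn δ O hδpos hδsym hOanti L ϑ μ hμ hdiff hlo hadm s hs1 hnc v t t' htt'
    hwait
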